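/- Let H be an undirected graph on n nodes and construct the directed acyclic graph G on n+1 nodes by orienting the edges of H according to a fixed linear order on its vertices and adding a new source node s with an edge from s to every vertex of H. Then β(G) = max(α(H), 1), where α(H) is the independence number of H. In particular β(G) ≥ α(H) and α(H) ≥ β(v) for every vertex v of H. -/

import Mathlib

/-- The independence number `α(H)` of an undirected graph. -/
def alphaH {V : Type*} [Fintype V] [DecidableEq V] (H : SimpleGraph V)
    [DecidableRel H.Adj] : ℕ :=
  (Finset.univ.powerset.filter fun A : Finset V =>
    ∀ x ∈ A, ∀ y ∈ A, x ≠ y → ¬H.Adj x y).sup Finset.card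

/-- `β(u)`: the maximum size of a subset of `{u} ∪ δ⁺(u)` independent in the
underlying undirected graph. -/
def betaAt {W : Type*} [Fintype W] [DecidableEq W] (E : W → W → Prop) [DecidableRel E]
    (u : W) : ℕ :=
  ((insert u (Finset.univ.filter fun v => E u v)).powerset.filter fun A : Finset W =>
    ∀ x ∈ A, ∀ y ∈ A, x ≠ y → ¬E x y ∧ ¬E y x).sup Finset.card

/-- `β(G)`. -/
def betaG {W : Type*} [Fintype W] [DecidableEq W] (E : W → W → Prop) [DecidableRel E] : ℕ :=
  Finset.univ.sup fun u => betaAt E u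

/-!
Removing the source `s` from an independent subset of `{u} ∪ δ⁺(u)` leaves a set of vertices of
`H` that is independent in `H`, because every edge of `H` appears as an arc in one of the two
directions. Hence `β(v) ≤ α(H)` for every vertex `v` of `H`. At the source, `δ⁺(s)` is all of
`V(H)`: an independent set containing `s` is `{s}` itself, while every independent set of `H` is
an independent subset of `δ⁺(s)`. So `β(s) = max (α(H)) 1`, and this is `β(G)`.
-/

open Finset

section Characterizations

lemma card_le_alphaH {V : Type*} [Fintype V] [DecidableEq V] {H : SimpleGraph V}
    [DecidableRel H.Adj] {B : Finset V} (hB : ∀ x ∈ B, ∀ y ∈ B, x ≠ y → ¬H.Adj x y) :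
    #B ≤ alphaH H :=
  le_sup (mem_filter.2 ⟨mem_powerset.2 (subset_univ B), hB⟩)

lemma alphaH_le_iff {V : Type*} [Fintype V] [DecidableEq V] {H : SimpleGraph V}
    [DecidableRel H.Adj] {n : ℕ} :
    alphaH H ≤ n ↔ ∀ B : Finset V, (∀ x ∈ B, ∀ y ∈ B, x ≠ y → ¬H.Adj x y) → #B ≤ n := by
  simp [alphaH, Finset.sup_le_iff]

variable {W : Type*} [Fintype W] [DecidableEq W] {E : W → W → Prop} [DecidableRel E]

lemma card_le_betaAt {u : W} {A : Finset W} (hA : A ⊆ insert u ({v | E u v} : Finset W))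
    (hind : ∀ x ∈ A, ∀ y ∈ A, x ≠ y → ¬E x y ∧ ¬E y x) : #A ≤ betaAt E u :=
  le_sup (mem_filter.2 ⟨mem_powerset.2 hA, hind⟩)

lemma betaAt_le_iff {u : W} {n : ℕ} :
    betaAt E u ≤ n ↔ ∀ A : Finset W, A ⊆ insert u ({v | E u v} : Finset W) →
      (∀ x ∈ A, ∀ y ∈ A, x ≠ y → ¬E x y ∧ ¬E y x) → #A ≤ n := by
  simp [betaAt, Finset.sup_le_iff]

end Characterizations

section OrientedGraph

variable {V : Type*} [LinearOrder V] {H : SimpleGraph V} {E : Option V → Option V → Prop}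

lemma not_adj_iff_of_orientation (hEH : ∀ u v : V, E (some u) (some v) ↔ H.Adj u v ∧ u < v)
    {x y : V} (hxy : x ≠ y) :
    ¬E (some x) (some y) ∧ ¬E (some y) (some x) ↔ ¬H.Adj x y := by
  rcases hxy.lt_or_gt with h | h
  · simp [hEH, h, h.not_gt]
  · simp [hEH, h, h.not_gt, H.adj_comm]

variable [Fintype V] [DecidableEq V] [DecidableRel H.Adj]

lemma card_eraseNone_le_alphaH (hEH : ∀ u v : V, E (some u) (some v) ↔ H.Adj u v ∧ u < v)
    {A : Finset (Option V)} (hind : ∀ x ∈ A, ∀ y ∈ A, x ≠ y → ¬E x y ∧ ¬E y x) :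
    #A.eraseNone ≤ alphaH H := by
  refine card_le_alphaH fun x hx y hy hxy => ?_
  rw [mem_eraseNone] at hx hy
  exact (not_adj_iff_of_orientation hEH hxy).1
    (hind _ hx _ hy (Option.some_injective V |>.ne hxy))

variable [DecidableRel E]

lemma betaAt_some_le_alphaH (hEH : ∀ u v : V, E (some u) (some v) ↔ H.Adj u v ∧ u < v)
    (hEnone : ∀ a : Option V, ¬E a none) (v : V) :
    betaAt E (some v) ≤ alphaH H := by
  refine betaAt_le_iff.2 fun A hA hind => ?_
  have hnone : none ∉ A := fun h => by
    simpa [hEnone] using hA h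
  rw [← card_eraseNone_of_not_mem hnone]
  exact card_eraseNone_le_alphaH hEH hind

lemma betaAt_none_le (hEH : ∀ u v : V, E (some u) (some v) ↔ H.Adj u v ∧ u < v)
    (hEsrc : ∀ v : V, E none (some v)) :
    betaAt E none ≤ max (alphaH H) 1 := by
  refine betaAt_le_iff.2 fun A _ hind => ?_
  by_cases hnone : none ∈ A
  · have hA : A ⊆ {none} := fun
      | none, _ => mem_singleton_self none
      | some w, hw => absurd (hEsrc w) (hind none hnone (some w) hw (by simp)).1
    exact (card_le_card hA).trans (le_max_right _ _)
  · rw [← card_eraseNone_of_not_mem hnone]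
    exact (card_eraseNone_le_alphaH hEH hind).trans (le_max_left _ _)

lemma le_betaAt_none (hEH : ∀ u v : V, E (some u) (some v) ↔ H.Adj u v ∧ u < v)
    (hEsrc : ∀ v : V, E none (some v)) :
    max (alphaH H) 1 ≤ betaAt E none := by
  refine max_le (alphaH_le_iff.2 fun B hB => ?_) ?_
  · rw [← card_map Function.Embedding.some]
    refine card_le_betaAt (fun a ha => ?_) fun x hx y hy hxy => ?_
    · obtain ⟨b, -, rfl⟩ := mem_map.1 ha
      simp [hEsrc]
    · obtain ⟨b, hb, rfl⟩ := mem_map.1 hx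
      obtain ⟨b', hb', rfl⟩ := mem_map.1 hy
      have hbb' : b ≠ b' := fun h => hxy (congrArg some h)
      exact (not_adj_iff_of_orientation hEH hbb').2 (hB b hb b' hb' hbb')
  · simpa using card_le_betaAt (E := E) (A := {none}) (u := none) (by simp) (by simp)

end OrientedGraph

theorem stmt_9_general {V : Type*} [Fintype V] [DecidableEq V] [LinearOrder V]
    (H : SimpleGraph V) [DecidableRel H.Adj]
    (E : Option V → Option V → Prop) [DecidableRel E]
    (hEsrc : ∀ v : V, E none (some v))
    (hEH : ∀ u v : V, E (some u) (some v) ↔ H.Adj u v ∧ u < v)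
    (hEnone : ∀ a : Option V, ¬E a none) :
    betaG E = max (alphaH H) 1 ∧
    alphaH H ≤ betaG E ∧
    ∀ v : V, betaAt E (some v) ≤ alphaH H := by
  have hsome := betaAt_some_le_alphaH hEH hEnone
  have hnone : betaAt E none = max (alphaH H) 1 :=
    (betaAt_none_le hEH hEsrc).antisymm (le_betaAt_none hEH hEsrc)
  have hbetaG : betaG E = max (alphaH H) 1 := by
    refine (Finset.sup_le fun u _ => ?_).antisymm (hnone ▸ le_sup (mem_univ none))
    cases u with
    | none => exact hnone.le
    | some v => exact (hsome v).trans (le_max_left _ _)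
  exact ⟨hbetaG, hbetaG ▸ le_max_left _ _, hsome⟩

/-- Let `G` be the DAG obtained from an undirected graph `H` by orienting edges along a
linear order and adding a source `s = none` with an arc to every vertex.  Then
`β(G) = max (α(H)) 1`; in particular `α(H) ≤ β(G)` and `β(v) ≤ α(H)` for every
vertex `v` of `H`. -/
theorem stmt_9 {V : Type*} [Fintype V] [DecidableEq V] [LinearOrder V] [Nonempty V]
    (H : SimpleGraph V) [DecidableRel H.Adj]
    (E : Option V → Option V → Prop) [DecidableRel E]
    (hEsrc : ∀ v : V, E none (some v))
    (hEH : ∀ u v : V, E (some u) (some v) ↔ H.Adj u v ∧ u < v)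
    (hEnone : ∀ a : Option V, ¬E a none) :
    betaG E = max (alphaH H) 1 ∧
    alphaH H ≤ betaG E ∧
    ∀ v : V, betaAt E (some v) ≤ alphaH H :=
  stmt_9_general H E hEsrc hEH hEnone
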